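/- Let k be a natural number, let p₁,…,p_k be distinct primes and n = p₁⋯p_k. Then the Harary index of the k-dprime divisor function graph Γ_k equals (2^{k−1}·(2^k − 3) + 3^k)/2, as a rational number. -/

import Mathlib

/-! The divisor `1` is adjacent to every other divisor, so two distinct divisors are at distance `1`
when one divides the other and at distance `2` otherwise. Summing over ordered pairs, twice the
Harary index is therefore `(N² + 2S - 3N) / 2`, where `N = τ(n) = 2^k` is the number of divisors and
`S = ∑_{d ∣ n} τ(d) = 3^k` counts the pairs `u ∣ v`; both counts follow from multiplicativity of
`σ₀` and `σ₀ * ζ`. -/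

/-- The `k`-dprime divisor function graph on the positive divisors of `n`:
two distinct divisors `u`, `v` are adjacent iff `u ∣ v` or `v ∣ u`. -/
def divisorGraph (n : ℕ) : SimpleGraph {d : ℕ // d ∈ n.divisors} where
  Adj u v := u ≠ v ∧ ((u : ℕ) ∣ (v : ℕ) ∨ (v : ℕ) ∣ (u : ℕ))
  symm := ⟨fun _ _ ⟨h, hd⟩ => ⟨h.symm, hd.symm⟩⟩
  loopless := ⟨fun _ ⟨h, _⟩ => h rfl⟩

instance (n : ℕ) : DecidableRel (divisorGraph n).Adj :=
  fun _ _ => instDecidableAnd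

open Finset ArithmeticFunction
open scoped ArithmeticFunction.sigma

theorem Finset.two_nsmul_sum_sym2_lift {α M : Type*} [DecidableEq α] [AddCommMonoid M]
    (s : Finset α) (f : {f : α → α → M // ∀ a b, f a b = f b a}) (hf : ∀ a, f.1 a a = 0) :
    2 • ∑ e ∈ s.sym2, Sym2.lift f e = ∑ a ∈ s, ∑ b ∈ s, f.1 a b := by
  rw [← sum_product', show ∑ x ∈ s ×ˢ s, f.1 x.1 x.2
      = ∑ x ∈ s ×ˢ s, Sym2.lift f (Function.uncurry Sym2.mk x) from rfl,
    sum_comp _ (Function.uncurry Sym2.mk), ← sym2_eq_image, smul_sum]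
  refine sum_congr rfl fun e he => ?_
  induction e using Sym2.ind with
  | _ a b =>
    obtain rfl | hab := eq_or_ne a b
    · simp [hf]
    · rw [mk_mem_sym2_iff] at he
      have hfiber : {x ∈ s ×ˢ s | Function.uncurry Sym2.mk x = s(a, b)} = {(a, b), (b, a)} := by
        ext ⟨c, d⟩
        simp only [mem_filter, mem_product, Function.uncurry_apply_pair, Sym2.eq_iff, mem_insert,
          mem_singleton, Prod.mk.injEq]
        grind
      rw [hfiber, card_pair (by simp [hab])]

theorem SimpleGraph.dist_eq_two_of_adj_of_adj {V : Type*} {G : SimpleGraph V} {u v w : V}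
    (huv : u ≠ v) (hnadj : ¬ G.Adj u v) (huw : G.Adj u w) (hwv : G.Adj w v) :
    G.dist u v = 2 := by
  have : G.edist u v = 2 := edist_eq_two_iff.mpr ⟨huv, hnadj, w, huw, hwv.symm⟩
  simp [SimpleGraph.dist, this]

theorem ArithmeticFunction.IsMultiplicative.map_prod_primes {R ι : Type*} [CommMonoidWithZero R]
    [Fintype ι] {f : ArithmeticFunction R} (hf : f.IsMultiplicative) {c : R}
    (hc : ∀ q : ℕ, q.Prime → f q = c) (p : ι → ℕ) (hp : ∀ i, (p i).Prime)
    (hinj : Function.Injective p) :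
    f (∏ i, p i) = c ^ Fintype.card ι := by
  rw [hf.map_prod p univ fun i _ j _ hij => (Nat.coprime_primes (hp i) (hp j)).mpr (hinj.ne hij),
    prod_congr rfl fun i _ => hc _ (hp i), prod_const, card_univ]

theorem ArithmeticFunction.sigma_zero_apply_prime {q : ℕ} (hq : q.Prime) : σ 0 q = 2 := by
  simpa using sigma_zero_apply_prime_pow (i := 1) hq

section ProdPrimes

variable {ι : Type*} [Fintype ι] (p : ι → ℕ) (hp : ∀ i, (p i).Prime)
  (hinj : Function.Injective p)
include hp hinj

theorem card_divisors_prod_primes : #(∏ i, p i).divisors = 2 ^ Fintype.card ι := by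
  rw [← sigma_zero_apply]
  exact isMultiplicative_sigma.map_prod_primes (fun _ => sigma_zero_apply_prime) p hp hinj

theorem sum_card_divisors_divisors_prod_primes :
    ∑ d ∈ (∏ i, p i).divisors, #d.divisors = 3 ^ Fintype.card ι := by
  simp_rw [← sigma_zero_apply, ← mul_zeta_apply]
  refine (isMultiplicative_sigma.mul isMultiplicative_zeta).map_prod_primes
    (fun q hq => ?_) p hp hinj
  rw [mul_zeta_apply, hq.sum_divisors, sigma_zero_apply_prime hq, sigma_zero_apply,
    Nat.divisors_one, card_singleton]

end ProdPrimes

section DivisorGraph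

variable {n : ℕ}

-- Encodes `1 / dist u v = 0, 1, 1/2` according as `u = v`, `u` and `v` are comparable under
-- divisibility, or not; `u ∣ v` and `v ∣ u` hold together only when `u = v`.
theorem divisorGraph_one_div_dist (hn : n ≠ 0) (u v : n.divisors) :
    1 / ((divisorGraph n).dist u v : ℚ) = (1 + (if (u : ℕ) ∣ v then 1 else 0)
      + (if (v : ℕ) ∣ u then 1 else 0) - if u = v then 3 else 0) / 2 := by
  obtain rfl | huv := eq_or_ne u v
  · norm_num
  have hadj : (divisorGraph n).Adj u v ↔ (u : ℕ) ∣ v ∨ (v : ℕ) ∣ u := and_iff_right huv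
  by_cases hdvd : (u : ℕ) ∣ v ∨ (v : ℕ) ∣ u
  · have hanti : ¬ ((u : ℕ) ∣ v ∧ (v : ℕ) ∣ u) := fun h =>
      huv (Subtype.ext (Nat.dvd_antisymm h.1 h.2))
    rw [SimpleGraph.dist_eq_one_iff_adj.mpr (hadj.mpr hdvd)]
    rcases hdvd with h | h <;> simp_all
  · push Not at hdvd
    let one : n.divisors := ⟨1, Nat.one_mem_divisors.mpr hn⟩
    have hu : u ≠ one := fun h => hdvd.1 (h ▸ one_dvd _)
    have hv : v ≠ one := fun h => hdvd.2 (h ▸ one_dvd _)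
    rw [SimpleGraph.dist_eq_two_of_adj_of_adj huv (hadj.not.mpr (by tauto))
      (w := one) ⟨hu, .inr (one_dvd _)⟩ ⟨hv.symm, .inl (one_dvd _)⟩]
    simp [hdvd, huv]

theorem divisorGraph_sum_sum_one_div_dist (hn : n ≠ 0) :
    ∑ u, ∑ v, 1 / ((divisorGraph n).dist u v : ℚ) =
      ((#n.divisors : ℚ) ^ 2 + 2 * ∑ d ∈ n.divisors, (#d.divisors : ℚ) - 3 * #n.divisors) / 2 := by
  have hcol : ∀ v : n.divisors,
      ∑ u : n.divisors, (if (u : ℕ) ∣ v then (1 : ℚ) else 0) = #(v : ℕ).divisors := fun v => by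
    rw [sum_coe_sort n.divisors fun u => if u ∣ (v : ℕ) then (1 : ℚ) else 0, sum_boole,
        Nat.divisors_filter_dvd_of_dvd hn (Nat.dvd_of_mem_divisors v.2)]
  simp_rw [divisorGraph_one_div_dist hn, ← sum_div, sum_sub_distrib, sum_add_distrib]
  rw [sum_comm (f := fun u v : n.divisors => if (u : ℕ) ∣ v then (1 : ℚ) else 0)]
  simp_rw [hcol]
  rw [sum_coe_sort n.divisors fun d => (#d.divisors : ℚ)]
  simp only [sum_const, card_univ, Fintype.card_coe, nsmul_eq_mul, mul_one, sum_ite_eq, mem_univ,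
    if_true]
  ring

end DivisorGraph

/-- Diagonal pairs `{u, u}` contribute `1 / 0 = 0` in `ℚ`, so the sum is the Harary index. -/
theorem stmt_9 (k : ℕ) (p : Fin k → ℕ) (hp : ∀ i, (p i).Prime)
    (hinj : Function.Injective p) (n : ℕ) (hn : n = ∏ i, p i) :
    ∑ e ∈ (Finset.univ : Finset {d : ℕ // d ∈ n.divisors}).sym2,
      Sym2.lift ⟨fun u v => (1 : ℚ) / ((divisorGraph n).dist u v : ℚ),
        fun u v => by beta_reduce; rw [SimpleGraph.dist_comm]⟩ e =
      ((2 : ℚ) ^ ((k : ℤ) - 1) * (2 ^ k - 3) + 3 ^ k) / 2 := by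
  subst hn
  have hn0 : ∏ i, p i ≠ 0 := prod_ne_zero_iff.mpr fun i _ => (hp i).ne_zero
  rw [eq_div_iff two_ne_zero, mul_comm, ← Nat.ofNat_nsmul_eq_mul,
    two_nsmul_sum_sym2_lift _ _ fun u => by simp, divisorGraph_sum_sum_one_div_dist hn0,
    card_divisors_prod_primes p hp hinj]
  rw [← Nat.cast_sum, sum_card_divisors_divisors_prod_primes p hp hinj, Fintype.card_fin,
    zpow_sub₀ two_ne_zero, zpow_natCast, zpow_one]
  push_cast
  ring
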